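/- arXiv:1409.2813 — 2 statements merged into one kernel-verified Lean document; each statement's English description precedes it below -/
import Mathlib

section
/- Fix d > 1 and 0 < λ < ∞, and let f_λ denote the unique fixed point of the truncated cavity operator T, extended to ℝ by 1 on (-∞,-λ] and 0 on (λ,∞). Then for all x ∈ [0, λ], f_λ(-x) ≥ exp(-exp(-f_λ(0) x^d)). -/
open MeasureTheory Set

/-- The truncated cavity operator `T`. -/
noncomputable def T (d lam : ℝ) (f : ℝ → ℝ) : ℝ → ℝ :=
  fun x => Real.exp (-(d * ∫ y in (-x)..lam, (x + y) ^ (d - 1) * f y))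

/-- `f` is the fixed point of the truncated cavity operator on `[-λ, λ]`
(non-increasing and `[0,1]`-valued there), extended to `ℝ` by `1` on `(-∞, -λ]`
and `0` on `(λ, ∞)`. -/
def ExtFixedPoint (d lam : ℝ) (f : ℝ → ℝ) : Prop :=
  AntitoneOn f (Icc (-lam) lam) ∧
  (∀ x ∈ Icc (-lam) lam, f x ∈ Icc (0 : ℝ) 1) ∧
  (∀ x ≤ -lam, f x = 1) ∧ (∀ x > lam, f x = 0) ∧
  (∀ x ∈ Icc (-lam) lam, T d lam f x = f x)

/-! Write `a = f_λ(0)`. Splitting the fixed-point integral at `0` and using `f_λ ≥ a` on `[-y, 0]`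
gives `f_λ(y) ≤ a exp(-a y^d)` on `[0, λ]`. Fed back into the fixed-point equation at `-x`, this
bounds the integrand by the derivative of `-exp(-a y^d)`, so `d ∫_x^λ (y - x)^(d-1) f_λ(y) dy`
is at most `exp(-a x^d)`. -/

open Real

section CavityIntegral

variable {d : ℝ} {f : ℝ → ℝ}

lemma Antitone.intervalIntegrable_add_rpow_mul (hf : Antitone f) (hd : 1 ≤ d) (x a b : ℝ) :
    IntervalIntegrable (fun y => (x + y) ^ (d - 1) * f y) volume a b :=
  hf.intervalIntegrable.continuousOn_mul
    ((continuous_rpow_const (by linarith)).comp (continuous_const_add x)).continuousOn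

lemma integral_add_rpow_sub_one (hd : 0 < d) (y : ℝ) :
    ∫ t in (-y)..0, (y + t) ^ (d - 1) = y ^ d / d := by
  rw [intervalIntegral.integral_comp_add_left (fun u => u ^ (d - 1)), add_neg_cancel, add_zero,
    integral_rpow (Or.inl (by linarith)), sub_add_cancel, zero_rpow hd.ne', sub_zero]

lemma mul_rpow_add_integral_le_integral_add_rpow_mul (hf : Antitone f) (hf0 : ∀ t, 0 ≤ f t)
    (hd : 1 ≤ d) {y lam : ℝ} (hy : 0 ≤ y) (hlam : 0 ≤ lam) :
    f 0 * y ^ d + d * ∫ t in 0..lam, t ^ (d - 1) * f t ≤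
      d * ∫ t in (-y)..lam, (y + t) ^ (d - 1) * f t := by
  have hd0 : 0 < d := by linarith
  have hint := hf.intervalIntegrable_add_rpow_mul hd y
  have hnear : f 0 * y ^ d ≤ d * ∫ t in (-y)..0, (y + t) ^ (d - 1) * f t := calc
    f 0 * y ^ d = d * ∫ t in (-y)..0, (y + t) ^ (d - 1) * f 0 := by
      rw [intervalIntegral.integral_mul_const, integral_add_rpow_sub_one hd0]
      field_simp
    _ ≤ d * ∫ t in (-y)..0, (y + t) ^ (d - 1) * f t := by
      refine mul_le_mul_of_nonneg_left (intervalIntegral.integral_mono_on (by linarith)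
        ((antitone_const (c := f 0)).intervalIntegrable_add_rpow_mul hd y _ _)
        (hint _ _) fun t ht => ?_) hd0.le
      exact mul_le_mul_of_nonneg_left (hf ht.2) (rpow_nonneg (by linarith [ht.1]) _)
  have hfar : ∫ t in 0..lam, t ^ (d - 1) * f t ≤ ∫ t in 0..lam, (y + t) ^ (d - 1) * f t := by
    refine intervalIntegral.integral_mono_on hlam
      (by simpa using hf.intervalIntegrable_add_rpow_mul hd 0 0 lam) (hint _ _) fun t ht => ?_
    exact mul_le_mul_of_nonneg_right
      (rpow_le_rpow ht.1 (by linarith [ht.1]) (by linarith)) (hf0 t)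
  rw [← intervalIntegral.integral_add_adjacent_intervals (hint (-y) 0) (hint 0 lam), mul_add]
  exact add_le_add hnear (mul_le_mul_of_nonneg_left hfar hd0.le)

lemma continuous_mul_rpow_mul_exp_neg_mul_rpow (hd : 1 ≤ d) (a : ℝ) :
    Continuous fun t : ℝ => d * (t ^ (d - 1) * (a * exp (-(a * t ^ d)))) := by
  have := continuous_rpow_const (by linarith : (0 : ℝ) ≤ d)
  have := continuous_rpow_const (by linarith : (0 : ℝ) ≤ d - 1)
  fun_prop

lemma integral_mul_rpow_mul_exp_neg_mul_rpow (hd : 1 ≤ d) (a x y : ℝ) :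
    ∫ t in x..y, d * (t ^ (d - 1) * (a * exp (-(a * t ^ d)))) =
      exp (-(a * x ^ d)) - exp (-(a * y ^ d)) := by
  have hderiv (t : ℝ) : HasDerivAt (fun t => -exp (-(a * t ^ d)))
      (d * (t ^ (d - 1) * (a * exp (-(a * t ^ d))))) t :=
    ((hasDerivAt_rpow_const (Or.inr hd)).const_mul a).fun_neg.exp.fun_neg.congr_deriv (by ring)
  rw [intervalIntegral.integral_eq_sub_of_hasDerivAt (fun t _ => hderiv t)
    ((continuous_mul_rpow_mul_exp_neg_mul_rpow hd a).intervalIntegrable _ _)]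
  ring

end CavityIntegral

namespace ExtFixedPoint

variable {d lam : ℝ} {f : ℝ → ℝ}

lemma le_one (hf : ExtFixedPoint d lam f) (x : ℝ) : f x ≤ 1 := by
  rcases le_or_gt x (-lam) with hx | hx
  · exact (hf.2.2.1 x hx).le
  rcases le_or_gt x lam with hx' | hx'
  · exact (hf.2.1 x ⟨hx.le, hx'⟩).2
  · rw [hf.2.2.2.1 x hx']
    exact zero_le_one

lemma nonneg (hf : ExtFixedPoint d lam f) (x : ℝ) : 0 ≤ f x := by
  rcases le_or_gt x (-lam) with hx | hx
  · rw [hf.2.2.1 x hx]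
    exact zero_le_one
  rcases le_or_gt x lam with hx' | hx'
  · exact (hf.2.1 x ⟨hx.le, hx'⟩).1
  · exact (hf.2.2.2.1 x hx').ge

protected lemma antitone (hf : ExtFixedPoint d lam f) : Antitone f := by
  intro s t hst
  rcases le_or_gt s (-lam) with hs | hs
  · exact hf.2.2.1 s hs ▸ hf.le_one t
  rcases le_or_gt t lam with ht | ht
  · exact hf.1 ⟨hs.le, hst.trans ht⟩ ⟨(hs.trans_le hst).le, ht⟩ hst
  · exact hf.2.2.2.1 t ht ▸ hf.nonneg s

lemma eq_exp (hf : ExtFixedPoint d lam f) {x : ℝ} (hx : x ∈ Icc (-lam) lam) :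
    f x = exp (-(d * ∫ y in (-x)..lam, (x + y) ^ (d - 1) * f y)) :=
  (hf.2.2.2.2 x hx).symm

lemma le_mul_exp_neg_mul_rpow (hf : ExtFixedPoint d lam f) (hd : 1 ≤ d) {y : ℝ}
    (hy : y ∈ Icc 0 lam) : f y ≤ f 0 * exp (-(f 0 * y ^ d)) := by
  have hf0 : f 0 = exp (-(d * ∫ t in 0..lam, t ^ (d - 1) * f t)) := by
    simpa using hf.eq_exp ⟨by linarith [hy.1, hy.2], hy.1.trans hy.2⟩
  rw [hf.eq_exp ⟨by linarith [hy.1, hy.2], hy.2⟩]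
  calc exp (-(d * ∫ t in (-y)..lam, (y + t) ^ (d - 1) * f t))
      ≤ exp (-(f 0 * y ^ d + d * ∫ t in 0..lam, t ^ (d - 1) * f t)) :=
        exp_le_exp.2 <| neg_le_neg <| mul_rpow_add_integral_le_integral_add_rpow_mul
          hf.antitone hf.nonneg hd hy.1 (hy.1.trans hy.2)
    _ = f 0 * exp (-(f 0 * y ^ d)) := by
        rw [hf0, ← exp_add]
        ring_nf

lemma integral_le (hf : ExtFixedPoint d lam f) (hd : 1 ≤ d) {x : ℝ} (hx : x ∈ Icc 0 lam) :
    d * ∫ y in x..lam, (-x + y) ^ (d - 1) * f y ≤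
      exp (-(f 0 * x ^ d)) - exp (-(f 0 * lam ^ d)) := by
  rw [← integral_mul_rpow_mul_exp_neg_mul_rpow hd, ← intervalIntegral.integral_const_mul]
  refine intervalIntegral.integral_mono_on hx.2
    ((hf.antitone.intervalIntegrable_add_rpow_mul hd _ _ _).const_mul d) ?_ fun y hy => ?_
  · exact (continuous_mul_rpow_mul_exp_neg_mul_rpow hd _).intervalIntegrable _ _
  have hy0 : 0 ≤ y := hx.1.trans hy.1
  refine mul_le_mul_of_nonneg_left (mul_le_mul ?_ (hf.le_mul_exp_neg_mul_rpow hd ⟨hy0, hy.2⟩)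
    (hf.nonneg y) (rpow_nonneg hy0 _)) (by linarith)
  exact rpow_le_rpow (by linarith [hy.1]) (by linarith [hx.1]) (by linarith)

end ExtFixedPoint

theorem fixedPoint_lower_bound_general (d lam : ℝ) (hd : 1 < d)
    (flam : ℝ → ℝ) (hflam : ExtFixedPoint d lam flam) :
    ∀ x ∈ Icc (0 : ℝ) lam, Real.exp (-Real.exp (-(flam 0 * x ^ d))) ≤ flam (-x) := by
  intro x hx
  rw [hflam.eq_exp ⟨neg_le_neg hx.2, by linarith [hx.1, hx.2]⟩, neg_neg, exp_le_exp,
    neg_le_neg_iff]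
  linarith [hflam.integral_le hd.le hx, exp_pos (-(flam 0 * lam ^ d))]

/-- for `x ∈ [0, λ]`, `f_λ(-x) ≥ exp(-exp(-f_λ(0) x^d))`. -/
theorem fixedPoint_lower_bound (d lam : ℝ) (hd : 1 < d) (hlam : 0 < lam)
    (flam : ℝ → ℝ) (hflam : ExtFixedPoint d lam flam) :
    ∀ x ∈ Icc (0 : ℝ) lam, Real.exp (-Real.exp (-(flam 0 * x ^ d))) ≤ flam (-x) :=
  fixedPoint_lower_bound_general d lam hd flam hflam
end

section
/- Fix d > 1, and let f, g : ℝ → [0,1] be measurable non-increasing solutions of the un-truncated cavity equation. Then the function Δ(t) := ∫_ℝ (f(y - t) - g(y)) dy is well-defined (the integrand is integrable for every t ∈ ℝ), continuous, non-decreasing in t, and tends to -∞ as t → -∞ and to +∞ as t → +∞. -/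
open MeasureTheory Set Filter

/-- `f : ℝ → [0,1]` is a measurable solution of the un-truncated Mézard–Parisi
cavity equation `f(x) = exp(-d ∫_{-x}^∞ (x+y)^{d-1} f(y) dy)`, the integrals
being (finite and) well-defined. -/
def SolvesCavity (d : ℝ) (f : ℝ → ℝ) : Prop :=
  Measurable f ∧ (∀ x : ℝ, f x ∈ Icc (0 : ℝ) 1) ∧
  (∀ x : ℝ, IntegrableOn (fun y => (x + y) ^ (d - 1) * f y) (Ioi (-x))) ∧
  (∀ x : ℝ, f x = Real.exp (-(d * ∫ y in Ioi (-x), (x + y) ^ (d - 1) * f y)))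

/-!
For `x ≥ 0` the cavity integral of a non-increasing solution `f` is at least `f 0 * x ^ d / d`
(integrate `f ≥ f 0` over the window where `f` is evaluated on `(-∞, 0]`), so
`f x ≤ exp (-f 0 * x ^ d)`. Feeding this decay back into the equation, together with the
superadditivity `u ^ d + v ^ d ≤ (u + v) ^ d`, gives `1 - f x ≤ C * exp (-f 0 * (-x) ^ d)` for
`x ≤ 0`. Hence `f - 𝟙_{(-∞, 0]}` is integrable, and
`Δ t = t + ∫ (f - 𝟙_{(-∞, 0]}) - ∫ (g - 𝟙_{(-∞, 0]})` is affine with slope one.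
-/

open Real

theorem integrableOn_Ioi_neg_comp_add_iff {E : Type*} [NormedAddCommGroup E] {G : ℝ → E}
    (x : ℝ) :
    IntegrableOn (fun y => G (x + y)) (Ioi (-x)) ↔ IntegrableOn G (Ioi 0) := by
  have := (measurePreserving_add_left volume x).integrableOn_comp_preimage
    (measurableEmbedding_addLeft x) (f := G) (s := Ioi 0)
  rwa [preimage_const_add_Ioi, zero_sub] at this

theorem setIntegral_Ioi_neg_comp_add {E : Type*} [NormedAddCommGroup E] [NormedSpace ℝ E]
    (G : ℝ → E) (x : ℝ) : ∫ y in Ioi (-x), G (x + y) = ∫ u in Ioi 0, G u := by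
  have := (measurePreserving_add_left volume x).setIntegral_preimage_emb
    (measurableEmbedding_addLeft x) G (Ioi 0)
  rwa [preimage_const_add_Ioi, zero_sub] at this

theorem integrableOn_Iic_comp_neg_iff {E : Type*} [NormedAddCommGroup E] {G : ℝ → E} :
    IntegrableOn (fun y => G (-y)) (Iic 0) ↔ IntegrableOn G (Ioi 0) := by
  have := (Measure.measurePreserving_neg (volume : Measure ℝ)).integrableOn_comp_preimage
    (Homeomorph.neg ℝ).measurableEmbedding (f := G) (s := Ioi 0)
  rw [integrableOn_Iic_iff_integrableOn_Iio, ← this]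
  simp [Function.comp_def]

theorem indicator_Iic_sub_indicator_Iic {s t : ℝ} (h : s ≤ t) :
    (fun y => (Iic t).indicator (1 : ℝ → ℝ) y - (Iic s).indicator 1 y) =
      (Ioc s t).indicator 1 := by
  rw [← Iic_sdiff_Iic, indicator_sdiff (Iic_subset_Iic.2 h)]
  rfl

theorem integrable_indicator_Iic_sub_indicator_Iic (s t : ℝ) :
    Integrable (fun y => (Iic t).indicator (1 : ℝ → ℝ) y - (Iic s).indicator 1 y) := by
  wlog h : s ≤ t generalizing s t
  · simpa only [Pi.neg_def, neg_sub] using (this t s (le_of_not_ge h)).neg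
  rw [indicator_Iic_sub_indicator_Iic h]
  exact (integrable_indicator_iff measurableSet_Ioc).2 (integrableOn_const measure_Ioc_lt_top.ne)

theorem integral_indicator_Iic_sub_indicator_Iic (s t : ℝ) :
    ∫ y, ((Iic t).indicator (1 : ℝ → ℝ) y - (Iic s).indicator 1 y) = t - s := by
  wlog h : s ≤ t generalizing s t
  · rw [← neg_sub, ← this t s (le_of_not_ge h), ← integral_neg]
    simp
  rw [indicator_Iic_sub_indicator_Iic h, integral_indicator_one measurableSet_Ioc,
    Real.volume_real_Ioc_of_le h]

theorem comp_sub_sub_eq (f g : ℝ → ℝ) (t y : ℝ) :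
    f (y - t) - g y = (f (y - t) - (Iic 0).indicator 1 (y - t))
      + ((Iic t).indicator 1 y - (Iic 0).indicator 1 y) - (g y - (Iic 0).indicator 1 y) := by
  have : (Iic (0 : ℝ)).indicator (1 : ℝ → ℝ) (y - t) = (Iic t).indicator 1 y := by
    simp only [indicator_apply, mem_Iic, sub_nonpos, Pi.one_apply]
  rw [this]
  ring

theorem integrable_comp_sub_sub {f g : ℝ → ℝ}
    (hf : Integrable (fun y => f y - (Iic 0).indicator 1 y))
    (hg : Integrable (fun y => g y - (Iic 0).indicator 1 y)) (t : ℝ) :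
    Integrable (fun y => f (y - t) - g y) :=
  (((hf.comp_sub_right t).add (integrable_indicator_Iic_sub_indicator_Iic 0 t)).sub hg).congr
    (ae_of_all _ fun y => (comp_sub_sub_eq f g t y).symm)

theorem integral_comp_sub_sub {f g : ℝ → ℝ}
    (hf : Integrable (fun y => f y - (Iic 0).indicator 1 y))
    (hg : Integrable (fun y => g y - (Iic 0).indicator 1 y)) (t : ℝ) :
    ∫ y, (f (y - t) - g y) =
      t + ((∫ y, (f y - (Iic 0).indicator 1 y)) - ∫ y, (g y - (Iic 0).indicator 1 y)) := by
  have hstep := integrable_indicator_Iic_sub_indicator_Iic 0 t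
  have hshift : Integrable (fun y => f (y - t) - (Iic 0).indicator 1 (y - t)) := hf.comp_sub_right t
  have hsum : Integrable (fun y => (f (y - t) - (Iic 0).indicator 1 (y - t))
      + ((Iic t).indicator 1 y - (Iic 0).indicator 1 y)) := hshift.add hstep
  simp_rw [comp_sub_sub_eq f g t]
  rw [integral_sub hsum hg, integral_add hshift hstep,
    integral_sub_right_eq_self (fun y => f y - (Iic 0).indicator 1 y) t,
    integral_indicator_Iic_sub_indicator_Iic]
  ring

/-- The integral `∫_{-x}^∞ (x + y) ^ (d - 1) f y dy` of the cavity equation, after the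
substitution `u = x + y`. -/
noncomputable def cavityIntegral (d : ℝ) (f : ℝ → ℝ) (x : ℝ) : ℝ :=
  ∫ u in Ioi 0, u ^ (d - 1) * f (u - x)

namespace SolvesCavity

variable {d : ℝ} {f : ℝ → ℝ}

protected theorem measurable (hf : SolvesCavity d f) : Measurable f := hf.1

theorem nonneg (hf : SolvesCavity d f) (x : ℝ) : 0 ≤ f x := (hf.2.1 x).1

theorem le_one (hf : SolvesCavity d f) (x : ℝ) : f x ≤ 1 := (hf.2.1 x).2

theorem integrableOn_cavityIntegrand (hf : SolvesCavity d f) (x : ℝ) :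
    IntegrableOn (fun u => u ^ (d - 1) * f (u - x)) (Ioi 0) := by
  rw [← integrableOn_Ioi_neg_comp_add_iff x]
  simpa only [add_sub_cancel_left] using hf.2.2.1 x

theorem eq_exp_cavityIntegral (hf : SolvesCavity d f) (x : ℝ) :
    f x = exp (-(d * cavityIntegral d f x)) := by
  rw [cavityIntegral, ← setIntegral_Ioi_neg_comp_add _ x]
  simpa only [add_sub_cancel_left] using hf.2.2.2 x

theorem pos (hf : SolvesCavity d f) (x : ℝ) : 0 < f x :=
  hf.eq_exp_cavityIntegral x ▸ exp_pos _

theorem div_mul_rpow_le_cavityIntegral (hf : SolvesCavity d f) (hd : 0 < d) (hanti : Antitone f)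
    {x : ℝ} (hx : 0 ≤ x) : f 0 * x ^ d / d ≤ cavityIntegral d f x := by
  have hpow : IntegrableOn (fun u : ℝ => u ^ (d - 1)) (Ioc 0 x) := by
    rw [← intervalIntegrable_iff_integrableOn_Ioc_of_le hx]
    exact intervalIntegral.intervalIntegrable_rpow' (by linarith)
  have hnonneg : ∀ u ∈ Ioi (0 : ℝ), 0 ≤ u ^ (d - 1) * f (u - x) := fun u hu =>
    mul_nonneg (rpow_nonneg hu.le _) (hf.nonneg _)
  calc f 0 * x ^ d / d = ∫ u in Ioc 0 x, u ^ (d - 1) * f 0 := by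
        rw [integral_mul_const, ← intervalIntegral.integral_of_le hx,
          integral_rpow (Or.inl (by linarith)), sub_add_cancel, zero_rpow hd.ne']
        ring
    _ ≤ ∫ u in Ioc 0 x, u ^ (d - 1) * f (u - x) :=
        setIntegral_mono_on (hpow.mul_const _)
          ((hf.integrableOn_cavityIntegrand x).mono_set Ioc_subset_Ioi_self) measurableSet_Ioc
          fun u hu => mul_le_mul_of_nonneg_left (hanti (by linarith [hu.2]))
            (rpow_nonneg hu.1.le _)
    _ ≤ cavityIntegral d f x :=
        setIntegral_mono_set (hf.integrableOn_cavityIntegrand x)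
          ((ae_restrict_mem measurableSet_Ioi).mono hnonneg)
          Ioc_subset_Ioi_self.eventuallyLE

theorem le_exp_neg_mul_rpow (hf : SolvesCavity d f) (hd : 0 < d) (hanti : Antitone f)
    {x : ℝ} (hx : 0 ≤ x) : f x ≤ exp (-f 0 * x ^ d) := by
  have := hf.div_mul_rpow_le_cavityIntegral hd hanti hx
  rw [hf.eq_exp_cavityIntegral x, exp_le_exp, neg_mul, neg_le_neg_iff]
  rwa [div_le_iff₀' hd] at this

theorem one_sub_le_mul_exp_neg_mul_rpow (hf : SolvesCavity d f) (hd : 1 < d) (hanti : Antitone f)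
    {x : ℝ} (hx : x ≤ 0) :
    1 - f x ≤ d * (∫ u in Ioi 0, u ^ (d - 1) * exp (-f 0 * u ^ d)) * exp (-f 0 * (-x) ^ d) := by
  have hd0 : 0 < d := by linarith
  have hK : IntegrableOn (fun u : ℝ => u ^ (d - 1) * exp (-f 0 * u ^ d)) (Ioi 0) :=
    integrableOn_rpow_mul_exp_neg_mul_rpow (by linarith) hd0 (hf.pos 0)
  have hpointwise : ∀ u ∈ Ioi (0 : ℝ), u ^ (d - 1) * f (u - x) ≤
      u ^ (d - 1) * exp (-f 0 * u ^ d) * exp (-f 0 * (-x) ^ d) := by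
    intro u hu
    have hsuper : u ^ d + (-x) ^ d ≤ (u - x) ^ d := by
      simpa only [← sub_eq_add_neg] using add_rpow_le_rpow_add hu.le (neg_nonneg.2 hx) hd.le
    rw [mul_assoc, ← exp_add]
    refine mul_le_mul_of_nonneg_left ?_ (rpow_nonneg hu.le _)
    refine (hf.le_exp_neg_mul_rpow hd0 hanti (by linarith [mem_Ioi.1 hu])).trans (exp_le_exp.2 ?_)
    nlinarith [hf.pos 0]
  calc 1 - f x ≤ d * cavityIntegral d f x := by
        linarith [hf.eq_exp_cavityIntegral x ▸ add_one_le_exp (-(d * cavityIntegral d f x))]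
    _ ≤ d * ∫ u in Ioi 0, u ^ (d - 1) * exp (-f 0 * u ^ d) * exp (-f 0 * (-x) ^ d) :=
        mul_le_mul_of_nonneg_left (setIntegral_mono_on (hf.integrableOn_cavityIntegrand x)
          (hK.mul_const _) measurableSet_Ioi hpointwise) hd0.le
    _ = _ := by rw [integral_mul_const, mul_assoc]

theorem integrable_sub_indicator_Iic (hf : SolvesCavity d f) (hd : 1 < d) (hanti : Antitone f) :
    Integrable (fun y => f y - (Iic 0).indicator 1 y) := by
  have hd0 : 0 < d := by linarith
  have hexp : IntegrableOn (fun u : ℝ => exp (-f 0 * u ^ d)) (Ioi 0) := by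
    simpa using integrableOn_rpow_mul_exp_neg_mul_rpow (s := 0) (by norm_num) hd0 (hf.pos 0)
  have hmeas : AEStronglyMeasurable (fun y => f y - (Iic 0).indicator 1 y) :=
    (hf.measurable.sub (measurable_const.indicator measurableSet_Iic)).aestronglyMeasurable
  rw [← integrableOn_univ, ← Iic_union_Ioi (a := (0 : ℝ)), integrableOn_union]
  constructor
  · refine Integrable.mono' ((integrableOn_Iic_comp_neg_iff.2 hexp).const_mul
      (d * ∫ u in Ioi 0, u ^ (d - 1) * exp (-f 0 * u ^ d))) hmeas.restrict ?_
    filter_upwards [ae_restrict_mem measurableSet_Iic] with y hy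
    rw [indicator_of_mem hy, Pi.one_apply, Real.norm_eq_abs, abs_sub_comm,
      abs_of_nonneg (sub_nonneg.2 (hf.le_one y))]
    exact hf.one_sub_le_mul_exp_neg_mul_rpow hd hanti hy
  · refine Integrable.mono' hexp hmeas.restrict ?_
    filter_upwards [ae_restrict_mem measurableSet_Ioi] with y hy
    rw [indicator_of_notMem (notMem_Iic.2 hy), sub_zero, Real.norm_eq_abs,
      abs_of_nonneg (hf.nonneg y)]
    exact hf.le_exp_neg_mul_rpow hd0 hanti hy.le

end SolvesCavity

/-- for two non-increasing solutions `f, g`, the shift functional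
`Δ(t) = ∫_ℝ (f(y-t) - g(y)) dy` is well-defined, continuous, non-decreasing,
and tends to `∓∞` as `t → ∓∞`. -/
theorem cavity_shift_functional (d : ℝ) (hd : 1 < d)
    (f g : ℝ → ℝ) (hf_anti : Antitone f) (hg_anti : Antitone g)
    (hf : SolvesCavity d f) (hg : SolvesCavity d g) :
    (∀ t : ℝ, Integrable (fun y => f (y - t) - g y)) ∧
    Continuous (fun t : ℝ => ∫ y : ℝ, (f (y - t) - g y)) ∧
    Monotone (fun t : ℝ => ∫ y : ℝ, (f (y - t) - g y)) ∧
    Tendsto (fun t : ℝ => ∫ y : ℝ, (f (y - t) - g y)) atBot atBot ∧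
    Tendsto (fun t : ℝ => ∫ y : ℝ, (f (y - t) - g y)) atTop atTop := by
  have hf' := hf.integrable_sub_indicator_Iic hd hf_anti
  have hg' := hg.integrable_sub_indicator_Iic hd hg_anti
  have hΔ : (fun t : ℝ => ∫ y : ℝ, (f (y - t) - g y)) = fun t => t + _ :=
    funext (integral_comp_sub_sub hf' hg')
  refine ⟨integrable_comp_sub_sub hf' hg', ?_, ?_, ?_, ?_⟩ <;> rw [hΔ]
  · fun_prop
  · exact monotone_id.add_const _
  · exact tendsto_atBot_add_const_right _ _ tendsto_id
  · exact tendsto_atTop_add_const_right _ _ tendsto_id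
end
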